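/- arXiv:1202.0123 — 2 statements merged into one kernel-verified Lean document; each statement's English description precedes it below -/
import Mathlib

section
/- Let G be a finite simple graph with at least one vertex. If G is a tree (connected and acyclic), then c(G) = 1. -/
/-- An (ordered) `k`-partition of a finite simple graph `G`: an ordered `k`-tuple of nonempty,
pairwise disjoint independent sets of `G` whose union is the whole vertex set. -/
def SimpleGraph.IsOrderedPartition {V : Type*} [Fintype V] [DecidableEq V]
    (G : SimpleGraph V) {k : ℕ} (J : Fin k → Finset V) : Prop :=
  (∀ i, (J i).Nonempty) ∧ (∀ i j, i ≠ j → Disjoint (J i) (J j)) ∧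
    (Finset.univ.biUnion J = Finset.univ) ∧
    (∀ i, ∀ a ∈ J i, ∀ b ∈ J i, ¬ G.Adj a b)

/-- `c_k(G)`: the number of (ordered) `k`-partitions of `G`, with `c_0(G) := 0`. -/
noncomputable def SimpleGraph.ckPart {V : Type*} [Fintype V] [DecidableEq V]
    (G : SimpleGraph V) (k : ℕ) : ℕ :=
  if k = 0 then 0 else Nat.card {J : Fin k → Finset V // G.IsOrderedPartition J}

/-- `c(G) := (-1)^l * ∑_{k=1}^{l} (-1)^k c_k(G)/k`, where `l` is the number of vertices. -/
noncomputable def SimpleGraph.cInv {V : Type*} [Fintype V] [DecidableEq V]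
    (G : SimpleGraph V) : ℚ :=
  (-1 : ℚ) ^ (Fintype.card V) *
    ∑ k ∈ Finset.Icc 1 (Fintype.card V), (-1 : ℚ) ^ k * (G.ckPart k : ℚ) / k

/-! Ordered `k`-partitions of `G` are the colour classes of surjective proper colourings
`V → Fin k`. If `v` is a leaf with neighbour `u`, a surjective `(k+1)`-colouring of `G` restricts
to a colouring of `G - v` that is either surjective, with `v` coloured by one of the `k` colours
other than that of `u`, or misses exactly the colour of `v`. Hence
`c_{k+1}(G) = k c_{k+1}(G - v) + (k+1) c_k(G - v)`, and under this recurrence the alternating sum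
`∑ (-1)^k c_k / k` telescopes to minus the one of `G - v`. So `c(G) = c(G - v)`, and pruning
leaves reduces a tree to a single vertex, where `c = 1`. -/

open Finset

theorem Set.range_eq_compl_singleton_iff {α γ : Type*} {f : γ → α} {a : α} :
    Set.range f = {a}ᶜ ↔ (∀ b, b ≠ a → b ∈ Set.range f) ∧ ¬ Function.Surjective f := by
  refine ⟨fun h => ⟨fun b hb => h ▸ hb, fun hf => (Set.ext_iff.1 h a).1 (hf a) rfl⟩,
    fun ⟨hcover, hf⟩ => Set.ext fun b => ⟨fun hb hba => hf fun c => ?_, hcover b⟩⟩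
  by_cases hca : c = a
  · exact (hca.trans hba.symm) ▸ hb
  · exact hcover c hca

theorem sum_Icc_neg_one_pow_mul_div_of_recurrence {a b : ℕ → ℚ} (hb : b 0 = 0)
    (hab : ∀ j : ℕ, a (j + 1) = j * b (j + 1) + (j + 1) * b j) (n : ℕ) :
    ∑ k ∈ Icc 1 (n + 1), (-1) ^ k * a k / k =
      (-1) ^ (n + 1) * b (n + 1) - ∑ k ∈ Icc 1 (n + 1), (-1) ^ k * b k / k := by
  induction n with
  | zero => simp [hab, hb]
  | succ n ih =>
    rw [Finset.sum_Icc_succ_top (by omega), ih,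
      Finset.sum_Icc_succ_top (show 1 ≤ n + 1 + 1 by omega) (fun k => (-1) ^ k * b k / k), hab]
    push_cast
    field_simp
    ring

theorem Function.surjective_iff_forall_ne_mem_range_domRestrict {V α : Type*} {f : V → α} (v : V) :
    Function.Surjective f ↔ ∀ b, b ≠ f v → b ∈ Set.range (({v}ᶜ : Set V).domRestrict f) := by
  refine ⟨fun hf b hb => ?_, fun hf b => ?_⟩
  · obtain ⟨x, rfl⟩ := hf b
    exact ⟨⟨x, fun hx => hb (congrArg f hx)⟩, rfl⟩
  · by_cases hb : b = f v
    · exact ⟨v, hb.symm⟩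
    · obtain ⟨x, hx⟩ := hf b hb
      exact ⟨x, hx⟩

namespace SimpleGraph

variable {V α β : Type*}

abbrev SurjColoring (G : SimpleGraph V) (α : Type*) : Type _ :=
  {C : G.Coloring α // Function.Surjective C}

variable {G : SimpleGraph V}

theorem card_surjColoring_congr (e : α ≃ β) :
    Nat.card (G.SurjColoring α) = Nat.card (G.SurjColoring β) :=
  Nat.card_congr <| (G.recolorOfEquiv e).subtypeEquiv fun C => (e.comp_surjective C).symm

theorem card_surjColoring_eq_zero [Fintype V] [Fintype α] (h : Fintype.card V < Fintype.card α) :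
    Nat.card (G.SurjColoring α) = 0 := by
  have : IsEmpty (G.SurjColoring α) := ⟨fun C => (Fintype.card_le_of_surjective _ C.2).not_gt h⟩
  exact Nat.card_of_isEmpty

theorem card_surjColoring_of_isEmpty [Nonempty V] [IsEmpty α] :
    Nat.card (G.SurjColoring α) = 0 := by
  have : IsEmpty (G.SurjColoring α) := ⟨fun C => isEmptyElim (C.1 (Classical.arbitrary V))⟩
  exact Nat.card_of_isEmpty

theorem card_surjColoring_of_subsingleton [Nonempty V] [Subsingleton V] [Unique α] :
    Nat.card (G.SurjColoring α) = 1 := by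
  have hC : Function.Surjective (fun _ : V => (default : α)) := fun a =>
    ⟨Classical.arbitrary V, Subsingleton.elim _ _⟩
  refine Nat.card_eq_one_iff_exists.mpr ⟨⟨Coloring.mk _ fun h =>
    (G.ne_of_adj h (Subsingleton.elim _ _)).elim, hC⟩, fun C => ?_⟩
  exact Subtype.ext <| RelHom.ext fun _ => Subsingleton.elim _ _

section fibers

variable [Fintype V] {k : ℕ}

def Coloring.fibers (C : G.Coloring (Fin k)) (i : Fin k) : Finset V := univ.filter (C · = i)

theorem Coloring.fibers_injective : Function.Injective (Coloring.fibers (G := G) (k := k)) := by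
  intro C C' h
  refine RelHom.ext fun x => ?_
  have hx : x ∈ C'.fibers (C x) := h ▸ by simp [Coloring.fibers]
  simpa [Coloring.fibers, eq_comm] using hx

variable [DecidableEq V]

theorem IsOrderedPartition.eq_of_mem {J : Fin k → Finset V} (hJ : G.IsOrderedPartition J) {x : V}
    {i j : Fin k} (hi : x ∈ J i) (hj : x ∈ J j) : i = j := by
  by_contra hij
  exact Finset.disjoint_left.mp (hJ.2.1 i j hij) hi hj

theorem isOrderedPartition_iff_exists_fibers {J : Fin k → Finset V} :
    G.IsOrderedPartition J ↔ ∃ C : G.SurjColoring (Fin k), C.1.fibers = J := by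
  constructor
  · intro hJ
    have hcover : ∀ x, ∃ i, x ∈ J i := fun x => by
      simpa [← hJ.2.2.1] using Finset.mem_univ x
    choose f hf using hcover
    have hfib : ∀ x i, x ∈ J i ↔ f x = i := fun x i =>
      ⟨fun hi => hJ.eq_of_mem (hf x) hi, fun h => h ▸ hf x⟩
    refine ⟨⟨Coloring.mk f fun {a b} hab hfab => hJ.2.2.2 (f a) a (hf a) b (hfab ▸ hf b) hab,
      fun i => ?_⟩, ?_⟩
    · obtain ⟨x, hx⟩ := hJ.1 i
      exact ⟨x, (hfib x i).mp hx⟩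
    · ext i x
      change x ∈ univ.filter (f · = i) ↔ _
      simp [hfib]
  · rintro ⟨⟨C, hC⟩, rfl⟩
    refine ⟨fun i => ?_, fun i j hij => ?_, ?_, fun i a ha b hb hab => ?_⟩
    · obtain ⟨x, hx⟩ := hC i
      exact ⟨x, by simp [Coloring.fibers, hx]⟩
    · exact Finset.disjoint_filter.mpr fun x _ hi hj => hij (hi.symm.trans hj)
    · ext x
      simp [Coloring.fibers]
    · simp only [Coloring.fibers, mem_filter, mem_univ, true_and] at ha hb
      exact C.valid hab (ha.trans hb.symm)

theorem ckPart_eq_card_surjColoring [Nonempty V] (k : ℕ) :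
    G.ckPart k = Nat.card (G.SurjColoring (Fin k)) := by
  rcases k with _ | k
  · rw [ckPart, if_pos rfl, card_surjColoring_of_isEmpty]
  · have hrange : {J : Fin (k + 1) → Finset V | G.IsOrderedPartition J} =
        Set.range fun C : G.SurjColoring (Fin (k + 1)) => C.1.fibers := by
      ext J
      exact isOrderedPartition_iff_exists_fibers
    rw [ckPart, if_neg k.succ_ne_zero, ← Set.coe_ofPred, hrange]
    exact Nat.card_range_of_injective (Coloring.fibers_injective.comp Subtype.val_injective)

end fibers

def Coloring.rangeEqEquiv (s : Set α) :
    {C : G.Coloring α // Set.range C = s} ≃ G.SurjColoring s where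
  toFun C := ⟨Coloring.mk (fun x => ⟨C.1 x, C.2.subset ⟨x, rfl⟩⟩)
      fun h hC => C.1.valid h (congrArg Subtype.val hC), by
    rintro ⟨a, ha⟩
    obtain ⟨x, rfl⟩ := C.2.symm ▸ ha
    exact ⟨x, rfl⟩⟩
  invFun C := ⟨G.recolorOfEmbedding (Function.Embedding.subtype s) C.1, by
    change Set.range (Subtype.val ∘ C.1) = s
    rw [Set.range_comp, C.2.range_eq, Set.image_univ, Subtype.range_coe]⟩
  left_inv C := rfl
  right_inv C := rfl

theorem card_coloring_prod_covering [Fintype V] [Fintype α] [DecidableEq α] (w : V) {k : ℕ}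
    (hα : Fintype.card α = k + 1) :
    Nat.card {p : G.Coloring α × α // p.2 ≠ p.1 w ∧ ∀ b, b ≠ p.2 → b ∈ Set.range p.1} =
      k * Nat.card (G.SurjColoring α) + (k + 1) * Nat.card (G.SurjColoring (Fin k)) := by
  set T := {p : G.Coloring α × α // p.2 ≠ p.1 w ∧ ∀ b, b ≠ p.2 → b ∈ Set.range p.1}
  have hsurj : {q : T // Function.Surjective q.1.1} ≃ Σ C : G.SurjColoring α, {a // a ≠ C.1 w} :=
    { toFun q := ⟨⟨q.1.1.1, q.2⟩, q.1.1.2, q.1.2.1⟩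
      invFun q := ⟨⟨(q.1.1, q.2.1), q.2.2, fun b _ => q.1.2 b⟩, q.1.2⟩
      left_inv q := rfl
      right_inv q := rfl }
  -- A non-surjective `C` in such a pair misses exactly the colour `a`.
  have hnonsurj : {q : T // ¬ Function.Surjective q.1.1} ≃
      Σ a : α, {C : G.Coloring α // Set.range C = {a}ᶜ} :=
    { toFun q := ⟨q.1.1.2, q.1.1.1, (Set.range_eq_compl_singleton_iff.2 ⟨q.1.2.2, q.2⟩)⟩
      invFun q := ⟨⟨(q.2.1, q.1), fun h => q.2.2.subset ⟨w, rfl⟩ h.symm,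
        (Set.range_eq_compl_singleton_iff.1 q.2.2).1⟩, (Set.range_eq_compl_singleton_iff.1 q.2.2).2⟩
      left_inv q := rfl
      right_inv q := rfl }
  rw [Nat.card_congr (Equiv.sumCompl fun q : T => Function.Surjective q.1.1).symm, Nat.card_sum,
    Nat.card_congr hsurj, Nat.card_congr hnonsurj, Nat.card_sigma, Nat.card_sigma]
  have hne : ∀ x : α, Nat.card {a // a ≠ x} = k := fun x => by
    simp [Nat.card_eq_fintype_card, Fintype.card_subtype_compl, hα]
  have hcompl : ∀ a : α, Nat.card {C : G.Coloring α // Set.range C = {a}ᶜ} =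
      Nat.card (G.SurjColoring (Fin k)) := fun a => by
    rw [Nat.card_congr (Coloring.rangeEqEquiv _)]
    exact card_surjColoring_congr (Finite.equivFinOfCardEq (hne a))
  simp only [hne, hcompl, Finset.sum_const, Finset.card_univ, smul_eq_mul, hα,
    Fintype.card_eq_nat_card]
  ring

section leaf

variable [DecidableEq V] {u v : V}

def coloringEquivOfLeaf (hleaf : ∀ w, G.Adj v w ↔ w = u) :
    G.Coloring α ≃ {p : (G.induce {v}ᶜ).Coloring α × α //
      p.2 ≠ p.1 ⟨u, (G.ne_of_adj ((hleaf u).2 rfl)).symm⟩} where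
  toFun C := ⟨(C.comp (Embedding.induce _).toHom, C v), C.valid ((hleaf u).2 rfl)⟩
  invFun p := Coloring.mk (fun x => if h : x = v then p.1.2 else p.1.1 ⟨x, h⟩) fun {x y} hxy => by
    by_cases hx : x = v
    · subst hx
      obtain rfl := (hleaf y).1 hxy
      simpa [(G.ne_of_adj hxy).symm] using p.2
    by_cases hy : y = v
    · subst hy
      obtain rfl := (hleaf x).1 hxy.symm
      simpa [hx] using p.2.symm
    simpa [hx, hy] using p.1.1.valid (v := ⟨x, hx⟩) (w := ⟨y, hy⟩) hxy
  left_inv C := by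
    refine RelHom.ext fun x => ?_
    by_cases hx : x = v
    · subst hx; simp [Coloring.mk]
    · simp [Coloring.mk, hx]
  right_inv p := by
    refine Subtype.ext (Prod.ext (RelHom.ext fun x => ?_) ?_)
    · have hx : (x : V) ≠ v := x.2
      simp [Coloring.mk, hx]
    · simp [Coloring.mk]

theorem card_surjColoring_of_leaf [Fintype V] (hleaf : ∀ w, G.Adj v w ↔ w = u) (k : ℕ) :
    Nat.card (G.SurjColoring (Fin (k + 1))) =
      k * Nat.card ((G.induce {v}ᶜ).SurjColoring (Fin (k + 1))) +
        (k + 1) * Nat.card ((G.induce {v}ᶜ).SurjColoring (Fin k)) := by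
  rw [← card_coloring_prod_covering _ (Fintype.card_fin _)]
  exact Nat.card_congr <| ((coloringEquivOfLeaf hleaf).subtypeEquiv fun C =>
    Function.surjective_iff_forall_ne_mem_range_domRestrict v).trans
    (Equiv.subtypeSubtypeEquivSubtypeInter _ _)

theorem cInv_eq_cInv_induce_of_leaf [Fintype V] (hleaf : ∀ w, G.Adj v w ↔ w = u) :
    G.cInv = (G.induce {v}ᶜ).cInv := by
  have : Nonempty V := ⟨v⟩
  have : Nonempty ↥({v}ᶜ : Set V) := ⟨⟨u, (G.ne_of_adj ((hleaf u).2 rfl)).symm⟩⟩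
  have hcard : Fintype.card V = Fintype.card ↥({v}ᶜ : Set V) + 1 := by
    have := Fintype.card_pos (α := V)
    rw [Fintype.card_compl_set, Set.card_singleton]
    omega
  have hrec : ∀ j : ℕ, (G.ckPart (j + 1) : ℚ) =
      j * (G.induce {v}ᶜ).ckPart (j + 1) + (j + 1) * (G.induce {v}ᶜ).ckPart j := fun j => by
    simp only [ckPart_eq_card_surjColoring, card_surjColoring_of_leaf hleaf]
    push_cast
    ring
  have htop : (G.induce {v}ᶜ).ckPart (Fintype.card ↥({v}ᶜ : Set V) + 1) = 0 := by
    rw [ckPart_eq_card_surjColoring, card_surjColoring_eq_zero (by rw [Fintype.card_fin]; omega)]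
  rw [cInv, cInv, hcard, sum_Icc_neg_one_pow_mul_div_of_recurrence
    (a := fun k => (G.ckPart k : ℚ)) (b := fun k => ((G.induce {v}ᶜ).ckPart k : ℚ))
    (by simp [ckPart]) hrec, Finset.sum_Icc_succ_top (by omega), htop]
  simp
  ring

end leaf

theorem cInv_eq_one_of_card_eq_one [Fintype V] [DecidableEq V] (h : Fintype.card V = 1) :
    G.cInv = 1 := by
  have : Subsingleton V := Fintype.card_le_one_iff_subsingleton.mp h.le
  have : Nonempty V := Fintype.card_pos_iff.mp (by omega)
  rw [cInv, h, Finset.Icc_self, Finset.sum_singleton, ckPart_eq_card_surjColoring,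
    card_surjColoring_of_subsingleton]
  norm_num

end SimpleGraph

theorem cInv_eq_one_of_isTree_general {V : Type*} [Fintype V] [DecidableEq V]
    (G : SimpleGraph V) (hG : G.IsTree) :
    G.cInv = 1 := by
  induction hn : Fintype.card V generalizing V with
  | zero => exact absurd hn (@Fintype.card_ne_zero _ _ hG.connected.nonempty)
  | succ n ih =>
    obtain rfl | hn0 := n.eq_zero_or_pos
    · exact SimpleGraph.cInv_eq_one_of_card_eq_one hn
    have : Nontrivial V := Fintype.one_lt_card_iff_nontrivial.mp (by omega)
    classical
    obtain ⟨v, hv⟩ := hG.exists_vert_degree_one_of_nontrivial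
    obtain ⟨u, hvu, hu⟩ := SimpleGraph.degree_eq_one_iff_existsUnique_adj.mp hv
    rw [SimpleGraph.cInv_eq_cInv_induce_of_leaf fun w => ⟨hu w, by rintro rfl; exact hvu⟩]
    exact ih _ ⟨hG.connected.induce_compl_singleton_of_degree_eq_one hv, hG.isAcyclic.induce _⟩
      (by rw [Fintype.card_compl_set, Set.card_singleton, hn, Nat.add_sub_cancel])

/-- **Trees.** If `G` is a tree (on at least one vertex), then `c(G) = 1`. -/
theorem cInv_eq_one_of_isTree {V : Type*} [Fintype V] [DecidableEq V] [Nonempty V]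
    (G : SimpleGraph V) (hG : G.IsTree) :
    G.cInv = 1 :=
  cInv_eq_one_of_isTree_general G hG
end

section
/- Let m ≥ 3 and let C_m be the cycle graph on m vertices. Then c(C_m) = m − 1. -/
/-!
Write `s_k(G)` for the number of surjective proper colourings `V → Fin k`; the colour classes of
such a colouring form an ordered `k`-partition, so `s_k(G) = c_k(G)`. Sorting the proper
colourings with `j` colours by their image gives `P_G(j) = ∑ₖ s_k(G) (j choose k)`, so the
chromatic polynomial is `P_G = ∑ₖ s_k(G) (X choose k)`, and since the derivative of
`X choose k` at `0` is `(-1)^(k-1) / k`, we get `c(G) = (-1)^(l+1) P_G'(0)`.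

Proper colourings of the path on `m` vertices split into those with distinct endpoints, which are
the colourings of `C_m`, and those with equal endpoints, which are the colourings of `C_(m-1)`.
Hence `P_{C_m}(x) = (x - 1)^m + (-1)^m (x - 1)`, and
`c(C_m) = (-1)^(m+1) (m (-1)^(m-1) + (-1)^m) = m - 1`.
-/

open Finset Polynomial
open scoped Nat

theorem Nat.card_subtype_and_add_card_subtype_and_not {β : Type*} [Finite β] (p q : β → Prop) :
    Nat.card {x // p x ∧ q x} + Nat.card {x // p x ∧ ¬q x} = Nat.card {x // p x} := by
  classical
  have := Fintype.ofFinite β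
  simp only [Nat.card_eq_fintype_card, Fintype.card_subtype, ← filter_filter]
  exact card_filter_add_card_filter_not _

theorem descPochhammer_eval_neg_one {R : Type*} [CommRing R] (n : ℕ) :
    (descPochhammer R n).eval (-1) = (-1) ^ n * n ! := by
  have h := ascPochhammer_eval_neg_eq_descPochhammer R (-1) n
  rw [neg_neg, ascPochhammer_eval_one] at h
  rw [h, ← mul_assoc, ← mul_pow, neg_one_mul, neg_neg, one_pow, one_mul]

theorem derivative_descPochhammer_succ_eval_zero {R : Type*} [CommRing R] (n : ℕ) :
    (derivative (descPochhammer R (n + 1))).eval 0 = (-1) ^ n * n ! := by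
  rw [descPochhammer_succ_left, derivative_mul]
  simp [eval_comp, descPochhammer_eval_neg_one]

namespace SimpleGraph

section SurjectiveColorings

variable {V : Type*} (G : SimpleGraph V)

noncomputable def numSurjColorings (k : ℕ) : ℕ :=
  Nat.card {C : G.Coloring (Fin k) // Function.Surjective C}

variable {G} in
def surjColoringsEquivOfEquiv {α β : Type*} (e : α ≃ β) :
    {C : G.Coloring α // Function.Surjective C} ≃ {C : G.Coloring β // Function.Surjective C} :=
  (G.recolorOfEquiv e).subtypeEquiv fun C => by
    simp [coe_recolorOfEquiv]

variable [Fintype V]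

variable {G} in
def coloringImageEquiv {α : Type*} [DecidableEq α] (T : Finset α) :
    {C : G.Coloring α // univ.image C = T} ≃ {C : G.Coloring T // Function.Surjective C} where
  toFun C := ⟨Coloring.mk (fun v => ⟨C.1 v, C.2.subset (mem_image_of_mem _ (mem_univ v))⟩)
      fun hab heq => C.1.valid hab (congrArg Subtype.val heq),
    fun t => by
      obtain ⟨v, -, hv⟩ := mem_image.1 (C.2.superset t.2)
      exact ⟨v, Subtype.ext hv⟩⟩
  invFun C := ⟨G.recolorOfEmbedding (Function.Embedding.subtype _) C.1, by
      ext x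
      simp only [mem_image, mem_univ, true_and, coe_recolorOfEmbedding]
      exact ⟨fun ⟨v, hv⟩ => hv ▸ (C.1 v).2,
        fun hx => (C.2 ⟨x, hx⟩).imp fun _ hv => congrArg Subtype.val hv⟩⟩
  left_inv C := rfl
  right_inv C := rfl

theorem card_coloring_eq_sum_choose_mul (α : Type*) [Fintype α] [DecidableEq α] :
    Nat.card (G.Coloring α) =
      ∑ k ∈ range (Fintype.card α + 1), (Fintype.card α).choose k * G.numSurjColorings k := by
  have hfiber (T : Finset α) :
      Nat.card {C : G.Coloring α // univ.image C = T} = G.numSurjColorings #T :=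
    Nat.card_congr ((coloringImageEquiv T).trans (surjColoringsEquivOfEquiv T.equivFin))
  rw [← Nat.card_congr (Equiv.sigmaFiberEquiv fun C : G.Coloring α => univ.image C),
    Nat.card_sigma]
  simp only [hfiber]
  rw [← powerset_univ, sum_powerset_apply_card, card_univ]
  simp

theorem numSurjColorings_eq_zero {k : ℕ} (hk : Fintype.card V < k) : G.numSurjColorings k = 0 :=
  Nat.card_eq_zero.2 <| .inl ⟨fun C =>
    (Fintype.card_le_of_surjective _ C.2).not_gt (by rwa [Fintype.card_fin])⟩

variable [DecidableEq V]

variable {G} in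
theorem IsOrderedPartition.existsUnique_mem {k : ℕ} {J : Fin k → Finset V}
    (hJ : G.IsOrderedPartition J) (v : V) : ∃! i, v ∈ J i := by
  obtain ⟨-, hdisj, hcover, -⟩ := hJ
  obtain ⟨i, -, hi⟩ := mem_biUnion.1 (hcover ▸ mem_univ v)
  exact ⟨i, hi, fun i' hi' => by_contra fun hne => Finset.disjoint_left.1 (hdisj i' i hne) hi' hi⟩

theorem ckPart_eq_numSurjColorings {k : ℕ} (hk : k ≠ 0) : G.ckPart k = G.numSurjColorings k := by
  rw [ckPart, if_neg hk, numSurjColorings]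
  symm
  refine Nat.card_eq_of_bijective
    (fun C => ⟨fun i => {v | C.1 v = i}, fun i => ?_, fun i i' hne => ?_, ?_, ?_⟩) ⟨?_, ?_⟩
  · obtain ⟨v, hv⟩ := C.2 i
    exact ⟨v, by simpa using hv⟩
  · exact Finset.disjoint_left.2 fun v hv hv' =>
      hne ((mem_filter.1 hv).2.symm.trans (mem_filter.1 hv').2)
  · exact eq_univ_of_forall fun v => mem_biUnion.2 ⟨C.1 v, mem_univ _, by simp⟩
  · intro i a ha b hb hab
    exact C.1.valid hab ((mem_filter.1 ha).2.trans (mem_filter.1 hb).2.symm)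
  · intro C C' h
    refine Subtype.ext (DFunLike.ext _ _ fun v => ?_)
    simpa [eq_comm] using congrArg (fun J => v ∈ J.1 (C.1 v)) h
  · rintro ⟨J, hJ⟩
    choose color hcolor huniq using hJ.existsUnique_mem
    refine ⟨⟨Coloring.mk color fun {a b} hab heq => hJ.2.2.2 _ a (hcolor a) b (heq ▸ hcolor b) hab,
      fun i => ?_⟩, ?_⟩
    · obtain ⟨v, hv⟩ := hJ.1 i
      exact ⟨v, (huniq v i hv).symm⟩
    · ext i v
      simpa using ⟨fun h => h ▸ hcolor v, fun h => (huniq v i h).symm⟩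

end SurjectiveColorings

section ChromaticPolynomial

variable {V : Type*} [Fintype V] (G : SimpleGraph V)

noncomputable def chromaticPolynomial : ℚ[X] :=
  ∑ k ∈ range (Fintype.card V + 1), C ((G.numSurjColorings k : ℚ) / k !) * descPochhammer ℚ k

theorem eval_natCast_chromaticPolynomial (j : ℕ) :
    G.chromaticPolynomial.eval (j : ℚ) = Nat.card (G.Coloring (Fin j)) := by
  set f : ℕ → ℚ := fun k => j.choose k * G.numSurjColorings k
  have hterm (k : ℕ) :
      (C ((G.numSurjColorings k : ℚ) / k !) * descPochhammer ℚ k).eval (j : ℚ) = f k := by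
    simp only [f]
    rw [eval_mul, eval_C, Nat.cast_choose_eq_descPochhammer_div (K := ℚ)]
    ring
  calc G.chromaticPolynomial.eval (j : ℚ)
      = ∑ k ∈ range (Fintype.card V + 1), f k := by
        rw [chromaticPolynomial, eval_finsetSum]
        exact sum_congr rfl fun k _ => hterm k
    _ = ∑ k ∈ range (Fintype.card V + j + 1), f k :=
        sum_subset (range_subset_range.2 (by omega)) fun k _ hk => by
          rw [mem_range, not_lt] at hk
          simp [f, G.numSurjColorings_eq_zero (by omega : Fintype.card V < k)]
    _ = ∑ k ∈ range (j + 1), f k :=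
        (sum_subset (range_subset_range.2 (by omega)) fun k _ hk => by
          rw [mem_range, not_lt] at hk
          simp [f, Nat.choose_eq_zero_of_lt (by omega : j < k)]).symm
    _ = Nat.card (G.Coloring (Fin j)) := by
        rw [card_coloring_eq_sum_choose_mul, Fintype.card_fin]
        push_cast
        rfl

theorem chromaticPolynomial_eq_of_eval_natCast {p : ℚ[X]}
    (hp : ∀ j : ℕ, p.eval (j : ℚ) = Nat.card (G.Coloring (Fin j))) : G.chromaticPolynomial = p :=
  eq_of_infinite_eval_eq _ _ <| Set.infinite_of_injective_forall_mem Nat.cast_injective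
    fun j => by simp [eval_natCast_chromaticPolynomial, hp]

theorem derivative_chromaticPolynomial_eval_zero :
    (derivative G.chromaticPolynomial).eval 0 =
      ∑ k ∈ range (Fintype.card V), (-1) ^ k * (G.numSurjColorings (k + 1) : ℚ) / (k + 1) := by
  rw [chromaticPolynomial, derivative_sum, eval_finsetSum, sum_range_succ']
  simp only [derivative_C_mul, eval_mul, eval_C, derivative_descPochhammer_succ_eval_zero,
    descPochhammer_zero, derivative_one, eval_zero, mul_zero, add_zero]
  refine sum_congr rfl fun k _ => ?_
  rw [Nat.factorial_succ]
  push_cast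
  field_simp

theorem cInv_eq_derivative_chromaticPolynomial_eval_zero [DecidableEq V] :
    G.cInv = (-1) ^ (Fintype.card V + 1) * (derivative G.chromaticPolynomial).eval 0 := by
  rw [cInv, derivative_chromaticPolynomial_eval_zero,
    ← Ico_add_one_right_eq_Icc 1 (Fintype.card V), sum_Ico_eq_sum_range, Nat.add_sub_cancel,
    pow_succ, mul_assoc, neg_one_mul, ← sum_neg_distrib]
  congr 1
  refine sum_congr rfl fun k _ => ?_
  rw [add_comm 1 k, ckPart_eq_numSurjColorings _ k.succ_ne_zero]
  push_cast
  ring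

end ChromaticPolynomial

section CycleColorings

variable {α : Type*}

def IsPathColoring {n : ℕ} (f : Fin (n + 1) → α) : Prop :=
  ∀ i : Fin n, f i.castSucc ≠ f i.succ

-- On `Fin 1` this reads `f 0 ≠ f 0`: the one-vertex cycle is a loop and has no colourings.
def IsCycleColoring {n : ℕ} (f : Fin (n + 1) → α) : Prop :=
  ∀ i, f i ≠ f (i + 1)

theorem isPathColoring_snoc {n : ℕ} {g : Fin (n + 1) → α} {c : α} :
    IsPathColoring (Fin.snoc g c : Fin (n + 2) → α) ↔ IsPathColoring g ∧ g (Fin.last n) ≠ c := by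
  simp [IsPathColoring, Fin.forall_fin_succ', Fin.succ_castSucc, -Fin.castSucc_succ]

theorem isPathColoring_iff_init {n : ℕ} {f : Fin (n + 2) → α} :
    IsPathColoring f ↔ IsPathColoring (Fin.init f) ∧ Fin.init f (Fin.last n) ≠ f (Fin.last _) := by
  rw [← isPathColoring_snoc, Fin.snoc_init_self]

theorem isCycleColoring_iff {n : ℕ} {f : Fin (n + 1) → α} :
    IsCycleColoring f ↔ IsPathColoring f ∧ f (Fin.last n) ≠ f 0 := by
  simp [IsCycleColoring, IsPathColoring, Fin.forall_fin_succ', Fin.coeSucc_eq_succ]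

def pathColoringSnocEquiv (n : ℕ) :
    {f : Fin (n + 2) → α // IsPathColoring f} ≃
      Σ g : {g : Fin (n + 1) → α // IsPathColoring g}, {c : α // g.1 (Fin.last n) ≠ c} where
  toFun f := ⟨⟨Fin.init f.1, (isPathColoring_iff_init.1 f.2).1⟩,
    ⟨f.1 (Fin.last _), (isPathColoring_iff_init.1 f.2).2⟩⟩
  invFun p := ⟨Fin.snoc p.1.1 p.2.1, isPathColoring_snoc.2 ⟨p.1.2, p.2.2⟩⟩
  left_inv f := Subtype.ext (Fin.snoc_init_self f.1)
  right_inv p := Sigma.subtype_ext (Subtype.ext (by simp)) (by simp)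

def closedPathColoringEquiv (n : ℕ) :
    {f : Fin (n + 2) → α // IsPathColoring f ∧ f (Fin.last _) = f 0} ≃
      {g : Fin (n + 1) → α // IsCycleColoring g} where
  toFun f := ⟨Fin.init f.1, by
    obtain ⟨hpath, hclosed⟩ := f.2
    rw [isPathColoring_iff_init, hclosed] at hpath
    exact isCycleColoring_iff.2 hpath⟩
  invFun g := ⟨Fin.snoc g.1 (g.1 0), by
    refine ⟨isPathColoring_snoc.2 (isCycleColoring_iff.1 g.2), ?_⟩
    simp⟩
  left_inv f := Subtype.ext <| by
    conv_rhs => rw [← Fin.snoc_init_self f.1, f.2.2]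
    rfl
  right_inv g := Subtype.ext (by simp)

variable [Fintype α]

theorem card_pathColoring (n : ℕ) :
    (Nat.card {f : Fin (n + 1) → α // IsPathColoring f} : ℤ) =
      Fintype.card α * (Fintype.card α - 1) ^ n := by
  classical
  induction n with
  | zero => simp [IsPathColoring]
  | succ n ih =>
    have hfiber (g : {g : Fin (n + 1) → α // IsPathColoring g}) :
        (Nat.card {c : α // g.1 (Fin.last n) ≠ c} : ℤ) = Fintype.card α - 1 := by
      rw [Nat.card_eq_fintype_card, Fintype.card_subtype_compl, Fintype.card_subtype_eq',
        Nat.cast_pred (Fintype.card_pos_iff.2 ⟨g.1 0⟩)]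
    rw [Nat.card_congr (pathColoringSnocEquiv n), Nat.card_sigma]
    push_cast
    simp only [hfiber, sum_const, card_univ, ← Nat.card_eq_fintype_card, nsmul_eq_mul, ih]
    ring

theorem card_cycleColoring_add_card_cycleColoring (n : ℕ) :
    Nat.card {f : Fin (n + 2) → α // IsCycleColoring f} +
      Nat.card {f : Fin (n + 1) → α // IsCycleColoring f} =
        Nat.card {f : Fin (n + 2) → α // IsPathColoring f} := by
  have hopen : Nat.card {f : Fin (n + 2) → α // IsCycleColoring f} =
      Nat.card {f : Fin (n + 2) → α // IsPathColoring f ∧ ¬f (Fin.last _) = f 0} :=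
    Nat.card_congr (Equiv.subtypeEquivRight fun _ => isCycleColoring_iff)
  rw [hopen, ← Nat.card_congr (closedPathColoringEquiv n), add_comm]
  exact Nat.card_subtype_and_add_card_subtype_and_not _ _

theorem card_cycleColoring (n : ℕ) :
    (Nat.card {f : Fin (n + 1) → α // IsCycleColoring f} : ℤ) =
      (Fintype.card α - 1) ^ (n + 1) + (-1) ^ (n + 1) * (Fintype.card α - 1) := by
  induction n with
  | zero =>
    have : IsEmpty {f : Fin 1 → α // IsCycleColoring f} := ⟨fun f => f.2 0 rfl⟩
    simp
  | succ n ih =>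
    have h := congrArg (Nat.cast : ℕ → ℤ) (card_cycleColoring_add_card_cycleColoring (α := α) n)
    push_cast at h
    rw [card_pathColoring] at h
    linear_combination h - ih

def cycleGraphColoringEquiv (n : ℕ) :
    (cycleGraph (n + 2)).Coloring α ≃ {f : Fin (n + 2) → α // IsCycleColoring f} where
  toFun C := ⟨C, fun i => C.valid (by simp [cycleGraph_adj])⟩
  invFun f := Coloring.mk f.1 fun {a b} hab => by
    rcases cycleGraph_adj.1 hab with h | h
    · rw [sub_eq_iff_eq_add'] at h
      exact h ▸ (f.2 b).symm
    · rw [sub_eq_iff_eq_add'] at h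
      exact h ▸ f.2 a
  left_inv C := rfl
  right_inv f := rfl

theorem chromaticPolynomial_cycleGraph (n : ℕ) :
    (cycleGraph (n + 2)).chromaticPolynomial = (X - 1) ^ (n + 2) + (-1) ^ (n + 2) * (X - 1) := by
  refine chromaticPolynomial_eq_of_eval_natCast _ fun j => ?_
  have h := card_cycleColoring (α := Fin j) (n + 1)
  rw [Fintype.card_fin] at h
  rw [Nat.card_congr (cycleGraphColoringEquiv n)]
  simp only [eval_add, eval_mul, eval_pow, eval_sub, eval_X, eval_one, eval_neg]
  exact_mod_cast h.symm

end CycleColorings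

end SimpleGraph

/-- **Cycle graphs.** For `m ≥ 3`, the cycle graph `C_m` on `m` vertices has `c(C_m) = m − 1`. -/
theorem cInv_cycleGraph (m : ℕ) (hm : 3 ≤ m) :
    (SimpleGraph.cycleGraph m).cInv = (m : ℚ) - 1 := by
  obtain ⟨n, rfl⟩ : ∃ n, m = n + 2 := ⟨m - 2, by omega⟩
  rw [SimpleGraph.cInv_eq_derivative_chromaticPolynomial_eval_zero,
    SimpleGraph.chromaticPolynomial_cycleGraph, Fintype.card_fin]
  have hderiv : (derivative ((X - 1) ^ (n + 2) + (-1) ^ (n + 2) * (X - 1) : ℚ[X])).eval 0 =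
      (n + 2) * (-1) ^ (n + 1) + (-1) ^ (n + 2) := by
    simp [derivative_pow]
  have hsq : ((-1 : ℚ) ^ n) ^ 2 = 1 := by rw [← pow_mul, pow_mul', neg_one_sq, one_pow]
  rw [hderiv]
  push_cast
  linear_combination (n + 1 : ℚ) * hsq
end
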